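/- Reduction inequalities from strong subadditivity and weak monotonicity: let n ≥ 1 and let S be a real-valued function on the subsets of {1,…,n} with S(∅) = 0 satisfying, for all pairwise disjoint X, Y, Z ⊆ {1,…,n}, strong subadditivity S(X∪Y) + S(Y∪Z) ≥ S(Y) + S(X∪Y∪Z) and weak monotonicity S(X∪Y) + S(Y∪Z) ≥ S(X) + S(Z). Define C_n(a) := Σ_{i=1}^n S({i+1,…,i+a}) (cyclic windows, indices modulo n) and C_n(a,b) := C_n(a) − C_n(b) − S({1,…,n}). Then: (i) for all integers a, b with a ≥ b ≥ 1 and a ≤ n, C_n(a−1, b−1) ≥ C_n(a,b); (ii) for all integers a, b with b ≥ 1 and a + b ≤ n, C_n(a+1, b−1) ≥ C_n(a,b); (iii) for every integer a with 0 ≤ a < n/2, C_n(a+1) ≥ C_n(a). -/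
import Mathlib

/-- The cyclic window of `a` consecutive elements starting at `i` (indices mod `n`);
summing over all `i` this gives the windows `{i+1,…,i+a}` of the paper. -/
def cycWindow (n i a : ℕ) : Finset (Fin n) :=
  Finset.univ.filter fun j => ∃ t < a, (i + t) % n = (j : ℕ)

/-- `C_n(a) = Σ_{i=1}^n S({i+1,…,i+a})` -/
noncomputable def cycC {n : ℕ} (S : Finset (Fin n) → ℝ) (a : ℕ) : ℝ :=
  ∑ i ∈ Finset.range n, S (cycWindow n i a)

/-- `C_n(a,b) = C_n(a) − C_n(b) − S({1,…,n})` -/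
noncomputable def cycCab {n : ℕ} (S : Finset (Fin n) → ℝ) (a b : ℕ) : ℝ :=
  cycC S a - cycC S b - S Finset.univ

lemma cycWindow_mod (n i a : ℕ) : cycWindow n i a = cycWindow n (i % n) a := by
  ext j
  simp only [cycWindow, Finset.mem_filter, Finset.mem_univ, true_and, Nat.mod_add_mod]

lemma cycWindow_union (n i s t : ℕ) :
    cycWindow n i (s + t) = cycWindow n i s ∪ cycWindow n (i + s) t := by
  ext j
  simp only [cycWindow, Finset.mem_union, Finset.mem_filter, Finset.mem_univ, true_and]
  constructor
  · rintro ⟨u, hu, h⟩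
    rcases lt_or_ge u s with h' | h'
    · exact Or.inl ⟨u, h', h⟩
    · exact Or.inr ⟨u - s, by omega, by rw [← h]; congr 1; omega⟩
  · rintro (⟨u, hu, h⟩ | ⟨u, hu, h⟩)
    · exact ⟨u, by omega, h⟩
    · exact ⟨s + u, by omega, by rw [← h]; congr 1; omega⟩

lemma cycWindow_disjoint (n i s t : ℕ) (h : s + t ≤ n) :
    Disjoint (cycWindow n i s) (cycWindow n (i + s) t) := by
  rw [Finset.disjoint_left]
  intro j hj1 hj2
  simp only [cycWindow, Finset.mem_filter, Finset.mem_univ, true_and] at hj1 hj2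
  obtain ⟨u, hu, h1⟩ := hj1
  obtain ⟨v, hv, h2⟩ := hj2
  have hm : (i + u) % n = (i + (s + v)) % n := by rw [← add_assoc, h1, h2]
  have hm' : u % n = (s + v) % n := Nat.ModEq.add_left_cancel' i hm
  rw [Nat.mod_eq_of_lt (by omega), Nat.mod_eq_of_lt (by omega)] at hm'
  omega

lemma sum_shift {n : ℕ} (f : ℕ → ℝ) (k : ℕ) :
    ∑ i ∈ Finset.range n, f ((i + k) % n) = ∑ i ∈ Finset.range n, f (i % n) := by
  apply Finset.sum_nbij' (i := fun i => (i + k) % n) (j := fun j => (j + (n - k % n)) % n)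
  · intro a ha
    simp only [Finset.mem_range] at *
    exact Nat.mod_lt _ (by omega)
  · intro a ha
    simp only [Finset.mem_range] at *
    exact Nat.mod_lt _ (by omega)
  · intro i hi
    simp only [Finset.mem_range] at hi
    have hq := Nat.div_add_mod k n
    have hr : k % n < n := Nat.mod_lt _ (by omega)
    rw [Nat.mod_add_mod]
    have he : i + k + (n - k % n) = i + n + n * (k / n) := by omega
    rw [he, Nat.add_mul_mod_self_left, Nat.add_mod_right]
    exact Nat.mod_eq_of_lt hi
  · intro j hj
    simp only [Finset.mem_range] at hj
    have hq := Nat.div_add_mod k n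
    have hr : k % n < n := Nat.mod_lt _ (by omega)
    rw [Nat.mod_add_mod]
    have he : j + (n - k % n) + k = j + n + n * (k / n) := by omega
    rw [he, Nat.add_mul_mod_self_left, Nat.add_mod_right]
    exact Nat.mod_eq_of_lt hj
  · intro a ha
    simp [Nat.mod_mod_of_dvd]

lemma cycC_shift {n : ℕ} (S : Finset (Fin n) → ℝ) (k a : ℕ) :
    ∑ i ∈ Finset.range n, S (cycWindow n (i + k) a) = cycC S a := by
  have h1 : ∀ m : ℕ, S (cycWindow n m a) = (fun j => S (cycWindow n j a)) (m % n) := by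
    intro m; simp only; rw [← cycWindow_mod]
  calc ∑ i ∈ Finset.range n, S (cycWindow n (i + k) a)
      = ∑ i ∈ Finset.range n, (fun j => S (cycWindow n j a)) ((i + k) % n) := by
        refine Finset.sum_congr rfl fun i _ => h1 _
    _ = ∑ i ∈ Finset.range n, (fun j => S (cycWindow n j a)) (i % n) := sum_shift (n := n) (fun j => S (cycWindow n j a)) k
    _ = cycC S a := by
        refine Finset.sum_congr rfl fun i _ => ?_
        rw [← h1]

/-- Reduction inequalities from strong subadditivity and weak
monotonicity: for an abstract entropy function `S` with `S(∅) = 0` satisfying SSA and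
WM for pairwise disjoint arguments, (i) `C_n(a−1,b−1) ≥ C_n(a,b)` for `a ≥ b ≥ 1`,
`a ≤ n`; (ii) `C_n(a+1,b−1) ≥ C_n(a,b)` for `b ≥ 1`, `a + b ≤ n`;
(iii) `C_n(a+1) ≥ C_n(a)` for `0 ≤ a < n/2`. -/
theorem stmt14 (n : ℕ) (hn : 1 ≤ n) (S : Finset (Fin n) → ℝ) (h0 : S ∅ = 0)
    (hSSA : ∀ X Y Z : Finset (Fin n), Disjoint X Y → Disjoint Y Z → Disjoint X Z →
      S (X ∪ Y) + S (Y ∪ Z) ≥ S Y + S (X ∪ Y ∪ Z))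
    (hWM : ∀ X Y Z : Finset (Fin n), Disjoint X Y → Disjoint Y Z → Disjoint X Z →
      S (X ∪ Y) + S (Y ∪ Z) ≥ S X + S Z) :
    (∀ a b : ℕ, 1 ≤ b → b ≤ a → a ≤ n → cycCab S (a - 1) (b - 1) ≥ cycCab S a b) ∧
    (∀ a b : ℕ, 1 ≤ b → a + b ≤ n → cycCab S (a + 1) (b - 1) ≥ cycCab S a b) ∧
    (∀ a : ℕ, 2 * a < n → cycC S (a + 1) ≥ cycC S a) := by
  refine ⟨?_, ?_, ?_⟩
  · -- (i): SSA with X = W(i,1), Y = W(i+1,b-1), Z = W(i+b,a-b)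
    intro a b hb hba han
    have key : ∀ i : ℕ,
        S (cycWindow n i b) + S (cycWindow n (i + 1) (a - 1)) ≥
        S (cycWindow n (i + 1) (b - 1)) + S (cycWindow n i a) := by
      intro i
      have hXY := cycWindow_union n i 1 (b - 1)
      rw [show 1 + (b - 1) = b from by omega] at hXY
      have hYZ := cycWindow_union n (i + 1) (b - 1) (a - b)
      rw [show (b - 1) + (a - b) = a - 1 from by omega,
        show (i + 1) + (b - 1) = i + b from by omega] at hYZ
      have hXYZ := cycWindow_union n i b (a - b)
      rw [show b + (a - b) = a from by omega] at hXYZ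
      have d1 : Disjoint (cycWindow n i 1) (cycWindow n (i + 1) (b - 1)) := by
        have := cycWindow_disjoint n i 1 (b - 1) (by omega)
        convert this using 2
      have d2 : Disjoint (cycWindow n (i + 1) (b - 1)) (cycWindow n (i + b) (a - b)) := by
        have := cycWindow_disjoint n (i + 1) (b - 1) (a - b) (by omega)
        have h1 : i + 1 + (b - 1) = i + b := by omega
        rwa [h1] at this
      have d3 : Disjoint (cycWindow n i 1) (cycWindow n (i + b) (a - b)) := by
        have := cycWindow_disjoint n i b (a - b) (by omega)
        refine Disjoint.mono_left ?_ this
        rw [hXY]; exact Finset.subset_union_left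
      have := hSSA (cycWindow n i 1) (cycWindow n (i + 1) (b - 1))
        (cycWindow n (i + b) (a - b)) d1 d2 d3
      rw [hXYZ, hXY, hYZ]
      exact this
    have hsum := Finset.sum_le_sum (s := Finset.range n)
      (f := fun i => S (cycWindow n (i + 1) (b - 1)) + S (cycWindow n i a))
      (g := fun i => S (cycWindow n i b) + S (cycWindow n (i + 1) (a - 1)))
      (fun i _ => key i)
    rw [Finset.sum_add_distrib, Finset.sum_add_distrib, cycC_shift, cycC_shift] at hsum
    simp only [cycCab, ge_iff_le, cycC] at *
    linarith
  · -- (ii): WM with X = W(i,a), Y = W(i+a,1), Z = W(i+a+1,b-1)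
    intro a b hb hab
    have key : ∀ i : ℕ,
        S (cycWindow n i (a + 1)) + S (cycWindow n (i + a) b) ≥
        S (cycWindow n i a) + S (cycWindow n (i + a + 1) (b - 1)) := by
      intro i
      have hXY := cycWindow_union n i a 1
      have hYZ := cycWindow_union n (i + a) 1 (b - 1)
      rw [show 1 + (b - 1) = b from by omega] at hYZ
      have d1 : Disjoint (cycWindow n i a) (cycWindow n (i + a) 1) :=
        cycWindow_disjoint n i a 1 (by omega)
      have d2 : Disjoint (cycWindow n (i + a) 1) (cycWindow n (i + a + 1) (b - 1)) := by
        have := cycWindow_disjoint n (i + a) 1 (b - 1) (by omega)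
        rwa [show i + a + 1 = i + a + 1 from rfl] at this
      have d3 : Disjoint (cycWindow n i a) (cycWindow n (i + a + 1) (b - 1)) := by
        have := cycWindow_disjoint n i (a + 1) (b - 1) (by omega)
        have h1 : i + (a + 1) = i + a + 1 := by omega
        rw [h1] at this
        refine Disjoint.mono_left ?_ this
        rw [hXY]; exact Finset.subset_union_left
      have := hWM (cycWindow n i a) (cycWindow n (i + a) 1)
        (cycWindow n (i + a + 1) (b - 1)) d1 d2 d3
      rwa [← hXY, ← hYZ] at this
    have hsum := Finset.sum_le_sum (s := Finset.range n)
      (f := fun i => S (cycWindow n i a) + S (cycWindow n (i + a + 1) (b - 1)))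
      (g := fun i => S (cycWindow n i (a + 1)) + S (cycWindow n (i + a) b))
      (fun i _ => key i)
    rw [Finset.sum_add_distrib, Finset.sum_add_distrib, cycC_shift] at hsum
    have h2 : ∑ i ∈ Finset.range n, S (cycWindow n (i + a + 1) (b - 1)) = cycC S (b - 1) := by
      calc ∑ i ∈ Finset.range n, S (cycWindow n (i + a + 1) (b - 1))
          = ∑ i ∈ Finset.range n, S (cycWindow n (i + (a + 1)) (b - 1)) := by
            refine Finset.sum_congr rfl fun i _ => ?_; rw [add_assoc]
        _ = cycC S (b - 1) := cycC_shift S (a + 1) (b - 1)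
    rw [h2] at hsum
    simp only [cycCab, ge_iff_le, cycC] at *
    linarith
  · -- (iii): WM with X = W(i,a), Y = W(i+a,1), Z = W(i+a+1,a)
    intro a ha
    have key : ∀ i : ℕ,
        S (cycWindow n i (a + 1)) + S (cycWindow n (i + a) (a + 1)) ≥
        S (cycWindow n i a) + S (cycWindow n (i + a + 1) a) := by
      intro i
      have hXY : cycWindow n i (a + 1) = cycWindow n i a ∪ cycWindow n (i + a) 1 := by
        rw [← cycWindow_union]
      have hYZ := cycWindow_union n (i + a) 1 a
      rw [show 1 + a = a + 1 from by omega] at hYZ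
      have d1 : Disjoint (cycWindow n i a) (cycWindow n (i + a) 1) :=
        cycWindow_disjoint n i a 1 (by omega)
      have d2 : Disjoint (cycWindow n (i + a) 1) (cycWindow n (i + a + 1) a) :=
        cycWindow_disjoint n (i + a) 1 a (by omega)
      have d3 : Disjoint (cycWindow n i a) (cycWindow n (i + a + 1) a) := by
        have := cycWindow_disjoint n i (a + 1) a (by omega)
        have h1 : i + (a + 1) = i + a + 1 := by omega
        rw [h1] at this
        refine Disjoint.mono_left ?_ this
        rw [hXY]; exact Finset.subset_union_left
      have := hWM (cycWindow n i a) (cycWindow n (i + a) 1)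
        (cycWindow n (i + a + 1) a) d1 d2 d3
      rwa [← hXY, ← hYZ] at this
    have hsum := Finset.sum_le_sum (s := Finset.range n)
      (f := fun i => S (cycWindow n i a) + S (cycWindow n (i + a + 1) a))
      (g := fun i => S (cycWindow n i (a + 1)) + S (cycWindow n (i + a) (a + 1)))
      (fun i _ => key i)
    rw [Finset.sum_add_distrib, Finset.sum_add_distrib, cycC_shift] at hsum
    have h2 : ∑ i ∈ Finset.range n, S (cycWindow n (i + a + 1) a) = cycC S a := by
      calc ∑ i ∈ Finset.range n, S (cycWindow n (i + a + 1) a)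
          = ∑ i ∈ Finset.range n, S (cycWindow n (i + (a + 1)) a) := by
            refine Finset.sum_congr rfl fun i _ => ?_; rw [add_assoc]
        _ = cycC S a := cycC_shift S (a + 1) a
    rw [h2] at hsum
    simp only [ge_iff_le, cycC] at *
    linarith
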